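/- Assume 0 < μ < 1, λ ≥ 0 and λ ≥ δ > −1. Define E_n = n^{−3/2} ∫_{1/n}^{π/4} ∫_φ^{π−φ} (cos²φ − cos²θ)^{μ−1} (sin(θ/2))^{−a−1} (cos(θ/2))^{−b−1} dθ (sin φ)^{2λ} dφ, where a = λ+μ+δ and b = λ+μ−1. Then there exists a constant c > 0 such that for all integers n ≥ 2: E_n ≤ c n^{−μ−1/2−(λ−δ)} + c n^{−3/2} log n. -/

import Mathlib

set_option maxHeartbeats 1000000


open MeasureTheory Finset Real intervalIntegral

lemma lemG (mu q φ : ℝ) (hmu : 0 < mu) (hmu2 : mu < 1) (hq : mu + q < 0)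
    (hφ1 : 0 < φ) (hφ2 : φ ≤ π/4) :
    IntervalIntegrable (fun θ => (θ - φ) ^ (mu - 1) * θ ^ q) volume φ (π - φ) ∧
    ∫ θ in φ..(π - φ), (θ - φ) ^ (mu - 1) * θ ^ q ≤
      (1/mu + 2 ^ (1+q) / (-(mu+q))) * φ ^ (mu + q) := by
  have hq0 : q < 0 := by linarith
  have hpi := Real.pi_pos
  have h2φ : 2*φ ≤ π - φ := by linarith
  have hbase : IntervalIntegrable (fun x : ℝ => x ^ (mu - 1)) volume 0 φ :=
    intervalIntegrable_rpow' (by linarith)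
  have hshift : IntervalIntegrable (fun θ : ℝ => (θ - φ) ^ (mu - 1)) volume φ (2*φ) := by
    have := hbase.comp_sub_right φ
    simpa [two_mul] using this
  have hcontq : ContinuousOn (fun θ : ℝ => θ ^ q) (Set.uIcc φ (2*φ)) := by
    rw [Set.uIcc_of_le (by linarith)]
    apply ContinuousOn.rpow_const continuousOn_id
    intro x hx
    exact Or.inl (by simp only [id_eq]; intro h; rw [h] at hx; linarith [hx.1])
  have int1 : IntervalIntegrable (fun θ => (θ - φ) ^ (mu - 1) * θ ^ q) volume φ (2*φ) :=
    hshift.mul_continuousOn hcontq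
  have int2 : IntervalIntegrable (fun θ => (θ - φ) ^ (mu - 1) * θ ^ q) volume (2*φ) (π - φ) := by
    apply ContinuousOn.intervalIntegrable
    rw [Set.uIcc_of_le h2φ]
    apply ContinuousOn.mul
    · apply ContinuousOn.rpow_const (by fun_prop)
      intro x hx
      exact Or.inl (by intro h; have := hx.1; simp only [sub_eq_zero] at h; rw [h] at this; linarith)
    · apply ContinuousOn.rpow_const continuousOn_id
      intro x hx
      exact Or.inl (by simp only [id_eq]; intro h; rw [h] at hx; linarith [hx.1])
  refine ⟨int1.trans int2, ?_⟩
  rw [← integral_add_adjacent_intervals int1 int2]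
  have hb1 : ∫ θ in φ..(2*φ), (θ - φ) ^ (mu - 1) * θ ^ q ≤ φ ^ (mu + q) / mu := by
    have hmono : ∫ θ in φ..(2*φ), (θ - φ) ^ (mu - 1) * θ ^ q ≤
        ∫ θ in φ..(2*φ), (θ - φ) ^ (mu - 1) * φ ^ q := by
      apply intervalIntegral.integral_mono_on (by linarith) int1 (hshift.mul_const _)
      intro x hx
      exact mul_le_mul_of_nonneg_left
        (Real.rpow_le_rpow_of_nonpos hφ1 hx.1 hq0.le)
        (Real.rpow_nonneg (by linarith [hx.1]) _)
    have hval : ∫ θ in φ..(2*φ), (θ - φ) ^ (mu - 1) * φ ^ q = (φ ^ mu / mu) * φ ^ q := by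
      rw [intervalIntegral.integral_mul_const]
      congr 1
      have := intervalIntegral.integral_comp_sub_right (a := φ) (b := 2*φ)
        (fun x : ℝ => x ^ (mu - 1)) φ
      rw [this, show φ - φ = (0:ℝ) by ring, show 2*φ - φ = φ by ring,
        integral_rpow (Or.inl (by linarith)), show mu - 1 + 1 = mu by ring,
        Real.zero_rpow (by linarith)]
      ring
    rw [hval] at hmono
    calc _ ≤ (φ ^ mu / mu) * φ ^ q := hmono
      _ = φ ^ (mu + q) / mu := by rw [Real.rpow_add hφ1]; ring
  have hb2 : ∫ θ in (2*φ)..(π - φ), (θ - φ) ^ (mu - 1) * θ ^ q ≤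
      2 ^ (1+q) / (-(mu+q)) * φ ^ (mu + q) := by
    have hmono : ∫ θ in (2*φ)..(π - φ), (θ - φ) ^ (mu - 1) * θ ^ q ≤
        ∫ θ in (2*φ)..(π - φ), 2 ^ (1 - mu) * θ ^ (mu - 1 + q) := by
      apply intervalIntegral.integral_mono_on h2φ int2
      · apply ContinuousOn.intervalIntegrable
        rw [Set.uIcc_of_le h2φ]
        apply ContinuousOn.mul continuousOn_const
        apply ContinuousOn.rpow_const continuousOn_id
        intro x hx
        exact Or.inl (by simp only [id_eq]; intro h; rw [h] at hx; linarith [hx.1])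
      · intro x hx
        have hx1 : 2*φ ≤ x := hx.1
        have hxpos : 0 < x := by linarith
        have h1 : (x - φ) ^ (mu - 1) ≤ (x/2) ^ (mu - 1) :=
          Real.rpow_le_rpow_of_nonpos (by linarith) (by linarith) (by linarith)
        have h2 : (x/2 : ℝ) ^ (mu - 1) = 2 ^ (1 - mu) * x ^ (mu - 1) := by
          rw [Real.div_rpow hxpos.le (by norm_num),
            show (1:ℝ) - mu = -(mu-1) by ring,
            Real.rpow_neg (by norm_num : (0:ℝ) ≤ 2), div_eq_mul_inv, mul_comm]
        calc (x - φ) ^ (mu - 1) * x ^ q ≤ (x/2) ^ (mu - 1) * x ^ q :=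
              mul_le_mul_of_nonneg_right h1 (Real.rpow_nonneg hxpos.le _)
          _ = 2 ^ (1 - mu) * x ^ (mu - 1 + q) := by
              rw [h2, Real.rpow_add hxpos, mul_assoc]
    have hval : ∫ θ in (2*φ)..(π - φ), 2 ^ (1 - mu) * θ ^ (mu - 1 + q) =
        2 ^ (1 - mu) * (((π - φ) ^ (mu + q) - (2*φ) ^ (mu + q)) / (mu + q)) := by
      rw [intervalIntegral.integral_const_mul]
      congr 1
      rw [integral_rpow (Or.inr ⟨by intro h; linarith, by
        rw [Set.uIcc_of_le h2φ]
        intro h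
        linarith [h.1]⟩),
        show mu - 1 + q + 1 = mu + q by ring]
    rw [hval] at hmono
    refine hmono.trans ?_
    have h1 : (0:ℝ) ≤ (π - φ) ^ (mu + q) := Real.rpow_nonneg (by linarith) _
    have hle : ((π - φ) ^ (mu + q) - (2*φ) ^ (mu + q)) / (mu + q) ≤
        (2*φ) ^ (mu + q) / (-(mu+q)) := by
      have hne : mu + q ≠ 0 := by linarith
      rw [show ((π - φ) ^ (mu + q) - (2*φ) ^ (mu + q)) / (mu + q) =
        ((2*φ) ^ (mu + q) - (π - φ) ^ (mu + q)) / (-(mu+q)) by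
          rw [div_eq_div_iff hne (by linarith : -(mu+q) ≠ 0)]; ring]
      gcongr
      · linarith
      · linarith [sub_le_self ((2*φ) ^ (mu + q)) h1]
    have h2 : (2:ℝ) ^ (1-mu) * (2:ℝ) ^ (mu+q) = 2 ^ (1+q) := by
      rw [← Real.rpow_add (by norm_num : (0:ℝ) < 2), show (1-mu)+(mu+q) = 1+q by ring]
    calc 2 ^ (1 - mu) * (((π - φ) ^ (mu + q) - (2*φ) ^ (mu + q)) / (mu + q))
        ≤ 2 ^ (1 - mu) * ((2*φ) ^ (mu + q) / (-(mu+q))) := by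
          gcongr
      _ = 2 ^ (1+q) / (-(mu+q)) * φ ^ (mu + q) := by
          rw [Real.mul_rpow (by norm_num) hφ1.le]
          linear_combination (φ ^ (mu+q) / (-(mu+q))) * h2
  calc _ ≤ φ ^ (mu + q) / mu + 2 ^ (1+q) / (-(mu+q)) * φ ^ (mu + q) := add_le_add hb1 hb2
    _ = (1/mu + 2 ^ (1+q) / (-(mu+q))) * φ ^ (mu + q) := by ring

lemma halfBound (mu A B φ θ : ℝ) (hmu1 : 0 < mu) (hmu2 : mu < 1)
    (hA : 0 < A) (hB : 0 < B) (hφ1 : 0 < φ) (hφ2 : φ ≤ π/4)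
    (hθ1 : φ < θ) (hθ2 : θ ≤ π/2) :
    (Real.cos φ ^ 2 - Real.cos θ ^ 2) ^ (mu - 1) * Real.sin (θ/2) ^ (-A) *
      Real.cos (θ/2) ^ (-B) ≤
    ((Real.sqrt 2 / π^2) ^ (mu-1) * π ^ A * (Real.sqrt 2 / 2) ^ (-B)) *
      ((θ - φ) ^ (mu-1) * θ ^ (mu - 1 - A)) := by
  have hpi := Real.pi_pos
  have hθ0 : 0 < θ := lt_trans hφ1 hθ1
  have hθφ : 0 < θ - φ := sub_pos.2 hθ1
  have hs2 : (0:ℝ) < Real.sqrt 2 := by positivity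
  have h1 : θ/π ≤ Real.sin (θ/2) := by
    have := Real.mul_le_sin (x := θ/2) (by linarith) (by linarith)
    calc θ/π = 2/π * (θ/2) := by field_simp
      _ ≤ Real.sin (θ/2) := this
  have hsinpos : 0 < Real.sin (θ/2) := lt_of_lt_of_le (by positivity) h1
  have h2 : Real.sqrt 2 / 2 ≤ Real.cos (θ/2) := by
    rw [← Real.cos_pi_div_four]
    exact Real.cos_le_cos_of_nonneg_of_le_pi (by linarith) (by linarith) (by linarith)
  have h3 : Real.sqrt 2 / π^2 * (θ * (θ - φ)) ≤ Real.cos φ ^ 2 - Real.cos θ ^ 2 := by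
    have hd : Real.cos φ - Real.cos θ =
        2 * Real.sin ((θ+φ)/2) * Real.sin ((θ-φ)/2) := by
      rw [Real.cos_sub_cos]
      rw [show (φ + θ)/2 = (θ+φ)/2 by ring, show (φ - θ)/2 = -((θ-φ)/2) by ring,
        Real.sin_neg]
      ring
    have hsa : θ/π ≤ Real.sin ((θ+φ)/2) := by
      have h := Real.mul_le_sin (x := (θ+φ)/2) (by linarith) (by linarith)
      calc θ/π ≤ (θ+φ)/π := by gcongr; linarith
        _ = 2/π * ((θ+φ)/2) := by field_simp
        _ ≤ _ := h
    have hsb : (θ-φ)/π ≤ Real.sin ((θ-φ)/2) := by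
      have h := Real.mul_le_sin (x := (θ-φ)/2) (by linarith) (by linarith)
      calc (θ-φ)/π = 2/π * ((θ-φ)/2) := by field_simp
        _ ≤ _ := h
    have hd2 : 2 * (θ/π) * ((θ-φ)/π) ≤ Real.cos φ - Real.cos θ := by
      rw [hd]
      have h0a : (0:ℝ) ≤ θ/π := by positivity
      have h0b : (0:ℝ) ≤ (θ-φ)/π := by positivity
      have := mul_le_mul hsa hsb h0b
        (Real.sin_nonneg_of_nonneg_of_le_pi (by linarith) (by linarith))
      nlinarith
    have hsum : Real.sqrt 2 / 2 ≤ Real.cos φ + Real.cos θ := by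
      have hcφ : Real.sqrt 2 / 2 ≤ Real.cos φ := by
        rw [← Real.cos_pi_div_four]
        exact Real.cos_le_cos_of_nonneg_of_le_pi (by linarith) (by linarith) (by linarith)
      have hcθ : 0 ≤ Real.cos θ := Real.cos_nonneg_of_mem_Icc ⟨by linarith, hθ2⟩
      linarith
    have hdiffpos : 0 ≤ Real.cos φ - Real.cos θ := by
      have : (0:ℝ) ≤ 2 * (θ/π) * ((θ-φ)/π) := by positivity
      linarith
    have key : (2 * (θ/π) * ((θ-φ)/π)) * (Real.sqrt 2 / 2) ≤
        (Real.cos φ - Real.cos θ) * (Real.cos φ + Real.cos θ) :=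
      mul_le_mul hd2 hsum (by positivity) hdiffpos
    calc Real.sqrt 2 / π^2 * (θ * (θ - φ)) = (2 * (θ/π) * ((θ-φ)/π)) * (Real.sqrt 2 / 2) := by
          field_simp
      _ ≤ (Real.cos φ - Real.cos θ) * (Real.cos φ + Real.cos θ) := key
      _ = Real.cos φ ^ 2 - Real.cos θ ^ 2 := by ring
  have hb1 : (Real.cos φ ^ 2 - Real.cos θ ^ 2) ^ (mu - 1) ≤
      (Real.sqrt 2 / π^2 * (θ * (θ - φ))) ^ (mu - 1) :=
    Real.rpow_le_rpow_of_nonpos (by positivity) h3 (by linarith)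
  have hb2 : Real.sin (θ/2) ^ (-A) ≤ (θ/π) ^ (-A) :=
    Real.rpow_le_rpow_of_nonpos (by positivity) h1 (by linarith)
  have hb3 : Real.cos (θ/2) ^ (-B) ≤ (Real.sqrt 2 / 2) ^ (-B) :=
    Real.rpow_le_rpow_of_nonpos (by positivity) h2 (by linarith)
  have hY1nn : (0:ℝ) ≤ (Real.sqrt 2 / π^2 * (θ * (θ - φ))) ^ (mu - 1) :=
    Real.rpow_nonneg (by positivity) _
  have hcosnn : (0:ℝ) ≤ Real.cos (θ/2) := by
    apply Real.cos_nonneg_of_mem_Icc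
    constructor <;> [linarith; linarith]
  have prod_le : (Real.cos φ ^ 2 - Real.cos θ ^ 2) ^ (mu - 1) * Real.sin (θ/2) ^ (-A) *
      Real.cos (θ/2) ^ (-B) ≤
      (Real.sqrt 2 / π^2 * (θ * (θ - φ))) ^ (mu - 1) * (θ/π) ^ (-A) *
        (Real.sqrt 2 / 2) ^ (-B) := by
    apply mul_le_mul _ hb3 (Real.rpow_nonneg hcosnn _)
      (mul_nonneg hY1nn (Real.rpow_nonneg (by positivity) _))
    exact mul_le_mul hb1 hb2 (Real.rpow_nonneg hsinpos.le _)
      (Real.rpow_nonneg (by positivity) _)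
  have hre : (Real.sqrt 2 / π^2 * (θ * (θ - φ))) ^ (mu - 1) * (θ/π) ^ (-A) *
      (Real.sqrt 2 / 2) ^ (-B) =
      ((Real.sqrt 2 / π^2) ^ (mu-1) * π ^ A * (Real.sqrt 2 / 2) ^ (-B)) *
        ((θ - φ) ^ (mu-1) * θ ^ (mu - 1 - A)) := by
    rw [Real.mul_rpow (by positivity) (by positivity),
      Real.mul_rpow hθ0.le hθφ.le,
      Real.div_rpow hθ0.le hpi.le,
      Real.rpow_neg hpi.le, div_inv_eq_mul,
      show mu - 1 - A = (mu - 1) + (-A) by ring, Real.rpow_add hθ0]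
    ring
  calc _ ≤ _ := prod_le
    _ = _ := hre

lemma innerBound (lam mu δ : ℝ) (hmu1 : 0 < mu) (hmu2 : mu < 1) (hlam : 0 ≤ lam)
    (hδ1 : -1 < δ) (hδ2 : δ ≤ lam) :
    ∃ C : ℝ, 0 < C ∧ ∀ φ : ℝ, 0 < φ → φ ≤ π/4 →
      (∫ θ in φ..(π - φ),
        (Real.cos φ ^ 2 - Real.cos θ ^ 2) ^ (mu - 1) *
          Real.sin (θ/2) ^ (-(lam + mu + δ) - 1) * Real.cos (θ/2) ^ (-(lam + mu - 1) - 1))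
      ≤ C * φ ^ (mu - lam - δ - 2) := by
  have hpi := Real.pi_pos
  have hs2 : (0:ℝ) < Real.sqrt 2 := by positivity
  set A := lam + mu + δ + 1 with hAdef
  set B := lam + mu with hBdef
  have hA : 0 < A := by simp only [hAdef]; linarith
  have hB : 0 < B := by simp only [hBdef]; linarith
  set q1 := mu - 1 - A with hq1def
  set q2 := mu - 1 - B with hq2def
  have hq1 : mu + q1 < 0 := by simp only [hq1def, hAdef]; linarith
  have hq2 : mu + q2 < 0 := by simp only [hq2def, hBdef]; linarith
  set K1 := (Real.sqrt 2 / π^2) ^ (mu-1) * π ^ A * (Real.sqrt 2 / 2) ^ (-B) with hK1def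
  set K2 := (Real.sqrt 2 / π^2) ^ (mu-1) * π ^ B * (Real.sqrt 2 / 2) ^ (-A) with hK2def
  have hK1 : 0 < K1 := by
    apply mul_pos (mul_pos _ _) <;> exact Real.rpow_pos_of_pos (by positivity) _
  have hK2 : 0 < K2 := by
    apply mul_pos (mul_pos _ _) <;> exact Real.rpow_pos_of_pos (by positivity) _
  set CG1 := 1/mu + 2 ^ (1+q1) / (-(mu+q1)) with hCG1def
  set CG2 := 1/mu + 2 ^ (1+q2) / (-(mu+q2)) with hCG2def
  have hCG1 : 0 < CG1 := by
    apply add_pos (by positivity)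
    exact div_pos (Real.rpow_pos_of_pos (by norm_num) _) (by linarith)
  have hCG2 : 0 < CG2 := by
    apply add_pos (by positivity)
    exact div_pos (Real.rpow_pos_of_pos (by norm_num) _) (by linarith)
  refine ⟨K1 * CG1 + K2 * CG2, by positivity, ?_⟩
  intro φ hφ1 hφ2
  have hle : φ ≤ π - φ := by linarith
  obtain ⟨hint1, hbd1⟩ := lemG mu q1 φ hmu1 hmu2 hq1 hφ1 hφ2
  obtain ⟨hint2raw, hbd2⟩ := lemG mu q2 φ hmu1 hmu2 hq2 hφ1 hφ2
  -- reflected integrand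
  have t2int : IntervalIntegrable (fun θ => (π - θ - φ) ^ (mu-1) * (π - θ) ^ q2)
      volume φ (π - φ) := by
    have h := hint2raw.comp_sub_left π
    rw [show π - (π - φ) = φ by ring] at h
    exact h.symm
  have t2val : (∫ θ in φ..(π - φ), (π - θ - φ) ^ (mu-1) * (π - θ) ^ q2) =
      ∫ u in φ..(π - φ), (u - φ) ^ (mu-1) * u ^ q2 := by
    have h := intervalIntegral.integral_comp_sub_left (a := φ) (b := π - φ)
      (fun u => (u - φ) ^ (mu-1) * u ^ q2) π
    rw [show π - (π - φ) = φ by ring] at h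
    exact h
  -- pointwise bound on Ioc
  have hpt : ∀ θ ∈ Set.Ioc φ (π - φ),
      (Real.cos φ ^ 2 - Real.cos θ ^ 2) ^ (mu - 1) *
          Real.sin (θ/2) ^ (-(lam + mu + δ) - 1) * Real.cos (θ/2) ^ (-(lam + mu - 1) - 1) ≤
      K1 * ((θ - φ) ^ (mu-1) * θ ^ q1) + K2 * ((π - θ - φ) ^ (mu-1) * (π - θ) ^ q2) := by
    intro θ hθ
    have hθ1 : φ < θ := hθ.1
    have hθ2 : θ ≤ π - φ := hθ.2
    have he1 : -(lam + mu + δ) - 1 = -A := by simp only [hAdef]; ring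
    have he2 : -(lam + mu - 1) - 1 = -B := by simp only [hBdef]; ring
    rw [he1, he2]
    have ht1nn : (0:ℝ) ≤ (θ - φ) ^ (mu-1) * θ ^ q1 :=
      mul_nonneg (Real.rpow_nonneg (by linarith) _) (Real.rpow_nonneg (by linarith) _)
    have ht2nn : (0:ℝ) ≤ (π - θ - φ) ^ (mu-1) * (π - θ) ^ q2 :=
      mul_nonneg (Real.rpow_nonneg (by linarith) _) (Real.rpow_nonneg (by linarith) _)
    rcases eq_or_lt_of_le hθ2 with heq | hlt
    · -- θ = π - φ : LHS is 0
      have hz : Real.cos φ ^ 2 - Real.cos θ ^ 2 = 0 := by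
        rw [heq, Real.cos_pi_sub]; ring
      rw [hz, Real.zero_rpow (by linarith : mu - 1 ≠ 0), zero_mul, zero_mul]
      exact add_nonneg (mul_nonneg hK1.le ht1nn) (mul_nonneg hK2.le ht2nn)
    · by_cases hhalf : θ ≤ π/2
      · have hh := halfBound mu A B φ θ hmu1 hmu2 hA hB hφ1 hφ2 hθ1 hhalf
        calc _ ≤ K1 * ((θ - φ) ^ (mu-1) * θ ^ (mu - 1 - A)) := hh
          _ = K1 * ((θ - φ) ^ (mu-1) * θ ^ q1) := by rw [← hq1def]
          _ ≤ _ := le_add_of_nonneg_right (mul_nonneg hK2.le ht2nn)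
      · push_neg at hhalf
        have hu1 : φ < π - θ := by linarith
        have hu2 : π - θ ≤ π/2 := by linarith
        have hh := halfBound mu B A φ (π - θ) hmu1 hmu2 hB hA hφ1 hφ2 hu1 hu2
        have hcos : Real.cos θ ^ 2 = Real.cos (π - θ) ^ 2 := by
          rw [Real.cos_pi_sub]; ring
        have hsin : Real.sin (θ/2) = Real.cos ((π - θ)/2) := by
          rw [show (π - θ)/2 = π/2 - θ/2 by ring, Real.cos_pi_div_two_sub]
        have hcos2 : Real.cos (θ/2) = Real.sin ((π - θ)/2) := by
          rw [show (π - θ)/2 = π/2 - θ/2 by ring, Real.sin_pi_div_two_sub]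
        rw [hcos, hsin, hcos2, mul_right_comm]
        calc _ ≤ ((Real.sqrt 2 / π^2) ^ (mu-1) * π ^ B * (Real.sqrt 2 / 2) ^ (-A)) *
              ((π - θ - φ) ^ (mu-1) * (π - θ) ^ (mu - 1 - B)) := hh
          _ = K2 * ((π - θ - φ) ^ (mu-1) * (π - θ) ^ q2) := by rw [← hK2def, ← hq2def]
          _ ≤ _ := le_add_of_nonneg_left (mul_nonneg hK1.le ht1nn)
  -- nonnegativity of integrand
  have hf0 : ∀ θ ∈ Set.Ioc φ (π - φ),
      0 ≤ (Real.cos φ ^ 2 - Real.cos θ ^ 2) ^ (mu - 1) *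
          Real.sin (θ/2) ^ (-(lam + mu + δ) - 1) * Real.cos (θ/2) ^ (-(lam + mu - 1) - 1) := by
    intro θ hθ
    have hθπ : θ ≤ π := by linarith [hθ.2]
    have hc1 : Real.cos θ ≤ Real.cos φ :=
      Real.cos_le_cos_of_nonneg_of_le_pi hφ1.le hθπ hθ.1.le
    have hc2 : -Real.cos φ ≤ Real.cos θ := by
      have := Real.cos_le_cos_of_nonneg_of_le_pi (by linarith [hθ.1] : (0:ℝ) ≤ θ)
        (by linarith : π - φ ≤ π) hθ.2
      rwa [Real.cos_pi_sub] at this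
    have hsq : Real.cos θ ^ 2 ≤ Real.cos φ ^ 2 := sq_le_sq' hc2 hc1
    have hsn : 0 ≤ Real.sin (θ/2) :=
      Real.sin_nonneg_of_nonneg_of_le_pi (by linarith [hθ.1]) (by linarith)
    have hcn : 0 ≤ Real.cos (θ/2) :=
      Real.cos_nonneg_of_mem_Icc ⟨by linarith [hθ.1], by linarith⟩
    exact mul_nonneg (mul_nonneg (Real.rpow_nonneg (by linarith) _)
      (Real.rpow_nonneg hsn _)) (Real.rpow_nonneg hcn _)
  -- integral comparison
  have gint : IntervalIntegrable
      (fun θ => K1 * ((θ - φ) ^ (mu-1) * θ ^ q1) + K2 * ((π - θ - φ) ^ (mu-1) * (π - θ) ^ q2))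
      volume φ (π - φ) := (hint1.const_mul K1).add (t2int.const_mul K2)
  have hmono : (∫ θ in φ..(π - φ),
        (Real.cos φ ^ 2 - Real.cos θ ^ 2) ^ (mu - 1) *
          Real.sin (θ/2) ^ (-(lam + mu + δ) - 1) * Real.cos (θ/2) ^ (-(lam + mu - 1) - 1)) ≤
      ∫ θ in φ..(π - φ),
        (K1 * ((θ - φ) ^ (mu-1) * θ ^ q1) + K2 * ((π - θ - φ) ^ (mu-1) * (π - θ) ^ q2)) := by
    rw [intervalIntegral.integral_of_le hle, intervalIntegral.integral_of_le hle]
    apply MeasureTheory.integral_mono_of_nonneg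
    · exact ae_restrict_of_forall_mem measurableSet_Ioc hf0
    · exact (intervalIntegrable_iff_integrableOn_Ioc_of_le hle).1 gint
    · exact ae_restrict_of_forall_mem measurableSet_Ioc hpt
  have hsplit : (∫ θ in φ..(π - φ),
        (K1 * ((θ - φ) ^ (mu-1) * θ ^ q1) + K2 * ((π - θ - φ) ^ (mu-1) * (π - θ) ^ q2))) =
      K1 * (∫ θ in φ..(π - φ), (θ - φ) ^ (mu-1) * θ ^ q1) +
      K2 * (∫ θ in φ..(π - φ), (π - θ - φ) ^ (mu-1) * (π - θ) ^ q2) := by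
    rw [intervalIntegral.integral_add (hint1.const_mul K1) (t2int.const_mul K2),
      intervalIntegral.integral_const_mul, intervalIntegral.integral_const_mul]
  have hφ1' : φ ≤ 1 := by linarith [Real.pi_le_four]
  have hexp : φ ^ (mu + q2) ≤ φ ^ (mu + q1) := by
    apply Real.rpow_le_rpow_of_exponent_ge hφ1 hφ1'
    simp only [hq1def, hq2def, hAdef, hBdef]; linarith
  calc _ ≤ _ := hmono
    _ = _ := hsplit
    _ ≤ K1 * (CG1 * φ ^ (mu + q1)) + K2 * (CG2 * φ ^ (mu + q2)) := by
        apply add_le_add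
        · exact mul_le_mul_of_nonneg_left hbd1 hK1.le
        · rw [t2val]
          exact mul_le_mul_of_nonneg_left hbd2 hK2.le
    _ ≤ K1 * (CG1 * φ ^ (mu + q1)) + K2 * (CG2 * φ ^ (mu + q1)) := by
        apply add_le_add le_rfl
        apply mul_le_mul_of_nonneg_left _ hK2.le
        exact mul_le_mul_of_nonneg_left hexp hCG2.le
    _ = (K1 * CG1 + K2 * CG2) * φ ^ (mu + q1) := by ring
    _ = (K1 * CG1 + K2 * CG2) * φ ^ (mu - lam - δ - 2) := by
        rw [show mu + q1 = mu - lam - δ - 2 by simp only [hq1def, hAdef]; ring]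

lemma Jnonneg (lam mu δ φ : ℝ) (hmu2 : mu < 1) (hφ1 : 0 < φ) (hφ2 : φ ≤ π/4) :
    0 ≤ ∫ θ in φ..(π - φ),
        (Real.cos φ ^ 2 - Real.cos θ ^ 2) ^ (mu - 1) *
          Real.sin (θ/2) ^ (-(lam + mu + δ) - 1) * Real.cos (θ/2) ^ (-(lam + mu - 1) - 1) := by
  have hpi := Real.pi_pos
  apply intervalIntegral.integral_nonneg (by linarith)
  intro θ hθ
  have hθπ : θ ≤ π := by linarith [hθ.2]
  have hc1 : Real.cos θ ≤ Real.cos φ :=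
    Real.cos_le_cos_of_nonneg_of_le_pi hφ1.le hθπ hθ.1
  have hc2 : -Real.cos φ ≤ Real.cos θ := by
    have := Real.cos_le_cos_of_nonneg_of_le_pi (by linarith [hθ.1] : (0:ℝ) ≤ θ)
      (by linarith : π - φ ≤ π) hθ.2
    rwa [Real.cos_pi_sub] at this
  have hsq : Real.cos θ ^ 2 ≤ Real.cos φ ^ 2 := sq_le_sq' hc2 hc1
  have hsn : 0 ≤ Real.sin (θ/2) :=
    Real.sin_nonneg_of_nonneg_of_le_pi (by linarith [hθ.1]) (by linarith)
  have hcn : 0 ≤ Real.cos (θ/2) :=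
    Real.cos_nonneg_of_mem_Icc ⟨by linarith [hθ.1], by linarith⟩
  exact mul_nonneg (mul_nonneg (Real.rpow_nonneg (by linarith) _)
    (Real.rpow_nonneg hsn _)) (Real.rpow_nonneg hcn _)



/-- The oscillatory integral
`M_n(φ) = ∫_φ^{π-φ} (cos²φ - cos²θ)^{μ-1} (sin(θ/2))^{-a} (cos(θ/2))^{-b} cos(Nθ+τ) dθ`
with `a = λ+μ+δ`, `b = λ+μ-1`, `N = n+(a+b)/2+1`, `τ = -π(a+1)/2`. -/
noncomputable def Mosc (lam mu δ : ℝ) (n : ℕ) (φ : ℝ) : ℝ :=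
  ∫ θ in φ..(Real.pi - φ),
    (Real.cos φ ^ 2 - Real.cos θ ^ 2) ^ (mu - 1) *
      (Real.sin (θ / 2)) ^ (-(lam + mu + δ)) * (Real.cos (θ / 2)) ^ (-(lam + mu - 1)) *
      Real.cos (((n : ℝ) + ((lam + mu + δ) + (lam + mu - 1)) / 2 + 1) * θ +
        (-(Real.pi * ((lam + mu + δ) + 1) / 2)))

/-- Lemma 4.5: for `0 < μ < 1`, `λ ≥ 0`, `-1 < δ ≤ λ`, with
`a = λ+μ+δ`, `b = λ+μ-1`, the error term
`E_n = n^{-3/2} ∫_{1/n}^{π/4} ∫_φ^{π-φ} (cos²φ-cos²θ)^{μ-1} (sin(θ/2))^{-a-1}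
(cos(θ/2))^{-b-1} dθ (sin φ)^{2λ} dφ` satisfies
`E_n ≤ c n^{-μ-1/2-(λ-δ)} + c n^{-3/2} log n` for all `n ≥ 2`. -/
theorem upper_bound_error_term (lam mu δ : ℝ) (hmu1 : 0 < mu) (hmu2 : mu < 1)
    (hlam : 0 ≤ lam) (hδ1 : -1 < δ) (hδ2 : δ ≤ lam) :
    ∃ c : ℝ, 0 < c ∧ ∀ n : ℕ, 2 ≤ n →
      (n : ℝ) ^ (-(3 : ℝ) / 2) *
        ∫ φ in ((n : ℝ)⁻¹)..(Real.pi / 4),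
          (∫ θ in φ..(Real.pi - φ),
            (Real.cos φ ^ 2 - Real.cos θ ^ 2) ^ (mu - 1) *
              (Real.sin (θ / 2)) ^ (-(lam + mu + δ) - 1) *
              (Real.cos (θ / 2)) ^ (-(lam + mu - 1) - 1)) *
          (Real.sin φ) ^ (2 * lam) ≤
        c * (n : ℝ) ^ (-mu - 1 / 2 - (lam - δ)) + c * (n : ℝ) ^ (-(3 : ℝ) / 2) * Real.log n := by
  obtain ⟨C, hC, hIB⟩ := innerBound lam mu δ hmu1 hmu2 hlam hδ1 hδ2
  have hpi := Real.pi_pos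
  have hpi3 := Real.pi_gt_three
  have hpi4 := Real.pi_lt_d2
  set t := mu + lam - δ - 2 with htdef
  have main : ∀ n : ℕ, 2 ≤ n →
      (n : ℝ) ^ (-(3 : ℝ) / 2) *
        (∫ φ in ((n : ℝ)⁻¹)..(π / 4),
          (∫ θ in φ..(π - φ),
            (Real.cos φ ^ 2 - Real.cos θ ^ 2) ^ (mu - 1) *
              (Real.sin (θ / 2)) ^ (-(lam + mu + δ) - 1) *
              (Real.cos (θ / 2)) ^ (-(lam + mu - 1) - 1)) *
          (Real.sin φ) ^ (2 * lam)) ≤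
      (n : ℝ) ^ (-(3 : ℝ) / 2) * (C * ∫ φ in ((n : ℝ)⁻¹)..(π / 4), φ ^ t) := by
    intro n hn
    have hn2 : (2:ℝ) ≤ (n:ℝ) := by exact_mod_cast hn
    have hn0 : (0:ℝ) < (n:ℝ) := by linarith
    have hinv0 : (0:ℝ) < (n:ℝ)⁻¹ := by positivity
    have hinvle : (n:ℝ)⁻¹ ≤ π/4 := by
      have : (n:ℝ)⁻¹ ≤ 2⁻¹ := by
        apply inv_anti₀ (by norm_num) hn2
      linarith
    apply mul_le_mul_of_nonneg_left _ (Real.rpow_nonneg hn0.le _)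
    rw [intervalIntegral.integral_of_le hinvle, ← intervalIntegral.integral_const_mul,
      intervalIntegral.integral_of_le hinvle]
    apply MeasureTheory.integral_mono_of_nonneg
    · apply ae_restrict_of_forall_mem measurableSet_Ioc
      intro φ hφ
      have hφ0 : 0 < φ := lt_trans hinv0 hφ.1
      exact mul_nonneg (Jnonneg lam mu δ φ hmu2 hφ0 hφ.2)
        (Real.rpow_nonneg (Real.sin_nonneg_of_nonneg_of_le_pi hφ0.le (by linarith [hφ.2])) _)
    · apply (intervalIntegrable_iff_integrableOn_Ioc_of_le hinvle).1
      apply ContinuousOn.intervalIntegrable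
      apply ContinuousOn.mul continuousOn_const
      apply ContinuousOn.rpow_const continuousOn_id
      intro x hx
      rw [Set.uIcc_of_le hinvle] at hx
      exact Or.inl (by simp only [id_eq]; intro h; rw [h] at hx; exact absurd hx.1 (by simp; positivity))
    · apply ae_restrict_of_forall_mem measurableSet_Ioc
      intro φ hφ
      have hφ0 : 0 < φ := lt_trans hinv0 hφ.1
      have hs1 : Real.sin φ ^ (2*lam) ≤ φ ^ (2*lam) :=
        Real.rpow_le_rpow (Real.sin_nonneg_of_nonneg_of_le_pi hφ0.le (by linarith [hφ.2]))
          (Real.sin_le hφ0.le) (by linarith)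
      calc (∫ θ in φ..(π - φ),
            (Real.cos φ ^ 2 - Real.cos θ ^ 2) ^ (mu - 1) *
              (Real.sin (θ / 2)) ^ (-(lam + mu + δ) - 1) *
              (Real.cos (θ / 2)) ^ (-(lam + mu - 1) - 1)) * (Real.sin φ) ^ (2 * lam)
          ≤ (C * φ ^ (mu - lam - δ - 2)) * φ ^ (2*lam) := by
            apply mul_le_mul (hIB φ hφ0 hφ.2) hs1
              (Real.rpow_nonneg (Real.sin_nonneg_of_nonneg_of_le_pi hφ0.le (by linarith [hφ.2])) _)
              (by positivity)
        _ = C * φ ^ t := by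
            rw [mul_assoc, ← Real.rpow_add hφ0, show mu - lam - δ - 2 + 2*lam = t by rw [htdef]; ring]
  -- now case on s := t + 1
  have hs' : t + 1 = mu + lam - δ - 1 := by rw [htdef]; ring
  rcases lt_trichotomy (t+1) 0 with hsneg | hszero | hspos
  · -- s < 0
    have hnt : (0:ℝ) < -(t+1) := by linarith
    refine ⟨C / (-(t+1)) + 1, by positivity, ?_⟩
    intro n hn
    have hn2 : (2:ℝ) ≤ (n:ℝ) := by exact_mod_cast hn
    have hn0 : (0:ℝ) < (n:ℝ) := by linarith
    have hinv0 : (0:ℝ) < (n:ℝ)⁻¹ := by positivity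
    have hinvle : (n:ℝ)⁻¹ ≤ π/4 := by
      have : (n:ℝ)⁻¹ ≤ 2⁻¹ := inv_anti₀ (by norm_num) hn2
      linarith
    have hval : ∫ φ in ((n : ℝ)⁻¹)..(π / 4), φ ^ t =
        ((π/4) ^ (t+1) - ((n:ℝ)⁻¹) ^ (t+1)) / (t+1) := by
      rw [integral_rpow (Or.inr ⟨by intro h; rw [h] at hsneg; norm_num at hsneg, by
        rw [Set.uIcc_of_le hinvle]; intro h; linarith [h.1]⟩)]
    have hbound : ∫ φ in ((n : ℝ)⁻¹)..(π / 4), φ ^ t ≤ ((n:ℝ)⁻¹) ^ (t+1) / (-(t+1)) := by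
      rw [hval, show ((π/4) ^ (t+1) - ((n:ℝ)⁻¹) ^ (t+1)) / (t+1) =
        (((n:ℝ)⁻¹) ^ (t+1) - (π/4) ^ (t+1)) / (-(t+1)) by
          rw [div_eq_div_iff (by linarith) (by linarith : -(t+1) ≠ 0)]; ring]
      gcongr
      · linarith [sub_le_self (((n:ℝ)⁻¹) ^ (t+1)) (Real.rpow_nonneg (by positivity : (0:ℝ) ≤ π/4) (t+1))]
    calc _ ≤ (n : ℝ) ^ (-(3 : ℝ) / 2) * (C * ∫ φ in ((n : ℝ)⁻¹)..(π / 4), φ ^ t) := main n hn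
      _ ≤ (n : ℝ) ^ (-(3 : ℝ) / 2) * (C * (((n:ℝ)⁻¹) ^ (t+1) / (-(t+1)))) := by
          apply mul_le_mul_of_nonneg_left (mul_le_mul_of_nonneg_left hbound hC.le)
            (Real.rpow_nonneg hn0.le _)
      _ = (C / (-(t+1))) * (n : ℝ) ^ (-mu - 1 / 2 - (lam - δ)) := by
          rw [Real.inv_rpow hn0.le, ← Real.rpow_neg hn0.le]
          rw [show ((n:ℝ) ^ (-(3:ℝ)/2) * (C * ((n:ℝ) ^ (-(t+1)) / (-(t+1))))) =
            (C / (-(t+1))) * ((n:ℝ) ^ (-(3:ℝ)/2) * (n:ℝ) ^ (-(t+1))) by ring,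
            ← Real.rpow_add hn0, show -(3:ℝ)/2 + -(t+1) = -mu - 1/2 - (lam - δ) by rw [htdef]; ring]
      _ ≤ _ := by
          have hlog : 0 ≤ Real.log n := Real.log_nonneg (by linarith)
          have h2 : 0 ≤ (C / (-(t+1)) + 1) * (n : ℝ) ^ (-(3 : ℝ) / 2) * Real.log n :=
            mul_nonneg (mul_nonneg (by positivity) (Real.rpow_nonneg hn0.le _)) hlog
          have h1 : (C / (-(t+1))) * (n : ℝ) ^ (-mu - 1 / 2 - (lam - δ)) ≤
              (C / (-(t+1)) + 1) * (n : ℝ) ^ (-mu - 1 / 2 - (lam - δ)) := by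
            apply mul_le_mul_of_nonneg_right (by linarith) (Real.rpow_nonneg hn0.le _)
          linarith
  · -- s = 0
    refine ⟨C + 1, by positivity, ?_⟩
    intro n hn
    have hn2 : (2:ℝ) ≤ (n:ℝ) := by exact_mod_cast hn
    have hn0 : (0:ℝ) < (n:ℝ) := by linarith
    have hinv0 : (0:ℝ) < (n:ℝ)⁻¹ := by positivity
    have hinvle : (n:ℝ)⁻¹ ≤ π/4 := by
      have : (n:ℝ)⁻¹ ≤ 2⁻¹ := inv_anti₀ (by norm_num) hn2
      linarith
    have ht1 : t = -1 := by linarith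
    have hval : ∫ φ in ((n : ℝ)⁻¹)..(π / 4), φ ^ t = Real.log ((π/4) / (n:ℝ)⁻¹) := by
      rw [show (fun φ : ℝ => φ ^ t) = (fun φ : ℝ => φ⁻¹) from funext fun φ => by
        rw [ht1, Real.rpow_neg_one]]
      exact integral_inv (by rw [Set.uIcc_of_le hinvle]; intro h; linarith [h.1])
    have hlogb : Real.log ((π/4) / (n:ℝ)⁻¹) ≤ Real.log n := by
      rw [div_inv_eq_mul, Real.log_mul (by positivity) (by positivity)]
      have : Real.log (π/4) ≤ 0 := Real.log_nonpos (by positivity) (by linarith)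
      linarith
    calc _ ≤ (n : ℝ) ^ (-(3 : ℝ) / 2) * (C * ∫ φ in ((n : ℝ)⁻¹)..(π / 4), φ ^ t) := main n hn
      _ ≤ (n : ℝ) ^ (-(3 : ℝ) / 2) * (C * Real.log n) := by
          apply mul_le_mul_of_nonneg_left _ (Real.rpow_nonneg hn0.le _)
          apply mul_le_mul_of_nonneg_left _ hC.le
          rw [hval]; exact hlogb
      _ = C * (n : ℝ) ^ (-(3 : ℝ) / 2) * Real.log n := by ring
      _ ≤ _ := by
          have hlog : 0 ≤ Real.log n := Real.log_nonneg (by linarith)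
          have h1 : 0 ≤ (C + 1) * (n : ℝ) ^ (-mu - 1 / 2 - (lam - δ)) := by positivity
          have h2 : C * (n : ℝ) ^ (-(3 : ℝ) / 2) * Real.log n ≤
              (C + 1) * (n : ℝ) ^ (-(3 : ℝ) / 2) * Real.log n := by
            apply mul_le_mul_of_nonneg_right _ hlog
            apply mul_le_mul_of_nonneg_right (by linarith) (Real.rpow_nonneg hn0.le _)
          linarith
  · -- s > 0
    have hlog2 : (0:ℝ) < Real.log 2 := Real.log_pos (by norm_num)
    have hps : (0:ℝ) < (π/4) ^ (t+1) / (t+1) :=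
      div_pos (Real.rpow_pos_of_pos (by positivity) _) hspos
    refine ⟨C * ((π/4) ^ (t+1) / (t+1)) / Real.log 2 + 1,
      add_pos (div_pos (mul_pos hC hps) hlog2) one_pos, ?_⟩
    intro n hn
    have hn2 : (2:ℝ) ≤ (n:ℝ) := by exact_mod_cast hn
    have hn0 : (0:ℝ) < (n:ℝ) := by linarith
    have hinv0 : (0:ℝ) < (n:ℝ)⁻¹ := by positivity
    have hinvle : (n:ℝ)⁻¹ ≤ π/4 := by
      have : (n:ℝ)⁻¹ ≤ 2⁻¹ := inv_anti₀ (by norm_num) hn2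
      linarith
    have hval : ∫ φ in ((n : ℝ)⁻¹)..(π / 4), φ ^ t =
        ((π/4) ^ (t+1) - ((n:ℝ)⁻¹) ^ (t+1)) / (t+1) := by
      rw [integral_rpow (Or.inr ⟨by intro h; rw [h] at hspos; norm_num at hspos, by
        rw [Set.uIcc_of_le hinvle]; intro h; linarith [h.1]⟩)]
    have hbound : ∫ φ in ((n : ℝ)⁻¹)..(π / 4), φ ^ t ≤ (π/4) ^ (t+1) / (t+1) := by
      rw [hval]
      gcongr
      linarith [sub_le_self ((π/4 : ℝ) ^ (t+1)) (Real.rpow_nonneg hinv0.le (t+1))]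
    have hlogn : Real.log 2 ≤ Real.log n := Real.log_le_log (by norm_num) hn2
    set D := C * ((π/4) ^ (t+1) / (t+1)) with hDdef
    have hD : 0 ≤ D := (mul_pos hC hps).le
    calc _ ≤ (n : ℝ) ^ (-(3 : ℝ) / 2) * (C * ∫ φ in ((n : ℝ)⁻¹)..(π / 4), φ ^ t) := main n hn
      _ ≤ (n : ℝ) ^ (-(3 : ℝ) / 2) * D := by
          apply mul_le_mul_of_nonneg_left _ (Real.rpow_nonneg hn0.le _)
          rw [hDdef]
          exact mul_le_mul_of_nonneg_left hbound hC.le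
      _ ≤ (D / Real.log 2 + 1) * (n : ℝ) ^ (-(3 : ℝ) / 2) * Real.log n := by
          have hnn : (0:ℝ) ≤ (n : ℝ) ^ (-(3 : ℝ) / 2) := Real.rpow_nonneg hn0.le _
          have : D ≤ (D / Real.log 2 + 1) * Real.log n := by
            calc D = (D / Real.log 2) * Real.log 2 := by field_simp
              _ ≤ (D / Real.log 2 + 1) * Real.log n := by
                  apply mul_le_mul (by linarith [hlog2]) hlogn hlog2.le (by positivity)
          calc (n : ℝ) ^ (-(3 : ℝ) / 2) * D ≤ (n : ℝ) ^ (-(3 : ℝ) / 2) * ((D / Real.log 2 + 1) * Real.log n) :=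
                mul_le_mul_of_nonneg_left this hnn
            _ = (D / Real.log 2 + 1) * (n : ℝ) ^ (-(3 : ℝ) / 2) * Real.log n := by ring
      _ ≤ _ := by
          have h1 : 0 ≤ (C * ((π/4) ^ (t+1) / (t+1)) / Real.log 2 + 1) *
              (n : ℝ) ^ (-mu - 1 / 2 - (lam - δ)) :=
            mul_nonneg (add_pos (div_pos (mul_pos hC hps) hlog2) one_pos).le
              (Real.rpow_nonneg hn0.le _)
          rw [hDdef]
          linarith
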